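/- (Performance bound controlled by value difference) Let M_src and M_tar be two MDPs differing only in transitions P_src and P_tar. For any policy π, η_{M_tar}(π) ≥ η_{M_src}(π) − (γ/(1−γ)) · E_{(s,a)∼ρ^π_{src}}[ | E_{s'∼P_src(·|s,a)}[V^π_{M_tar}(s')] − E_{s'∼P_tar(·|s,a)}[V^π_{M_tar}(s')] | ]. -/

import Mathlib

open scoped BigOperators

noncomputable section

/-- Distribution over states at time `t`, starting from `ρ0`, following policy `pol`
in the MDP with transition kernel `P`. -/
def stateDist {S A : Type} [Fintype S] [Fintype A]
    (P : S → A → S → ℝ) (pol : S → A → ℝ) (ρ0 : S → ℝ) : ℕ → S → ℝ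
  | 0 => ρ0
  | t + 1 => fun s' => ∑ s : S, ∑ a : A, stateDist P pol ρ0 t s * pol s a * P s a s'

/-- Normalized discounted state-action occupancy measure. -/
def occupancy {S A : Type} [Fintype S] [Fintype A]
    (P : S → A → S → ℝ) (pol : S → A → ℝ) (ρ0 : S → ℝ) (γ : ℝ) (s : S) (a : A) : ℝ :=
  (1 - γ) * ∑' t : ℕ, γ ^ t * stateDist P pol ρ0 t s * pol s a

/-- Normalized expected discounted return `η_M(π) = E_{(s,a)∼ρ^π_M}[r(s,a)]`. -/
def ret {S A : Type} [Fintype S] [Fintype A]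
    (P : S → A → S → ℝ) (pol : S → A → ℝ) (ρ0 : S → ℝ) (γ : ℝ) (r : S → A → ℝ) : ℝ :=
  ∑ s : S, ∑ a : A, occupancy P pol ρ0 γ s a * r s a

/-- Value function `V^π(s)`: expected discounted return starting from state `s`. -/
def valueFn {S A : Type} [Fintype S] [Fintype A] [DecidableEq S]
    (P : S → A → S → ℝ) (pol : S → A → ℝ) (γ : ℝ) (r : S → A → ℝ) (s : S) : ℝ :=
  ∑' t : ℕ, γ ^ t * ∑ s' : S, stateDist P pol (fun s'' => if s'' = s then 1 else 0) t s' *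
    ∑ a : A, pol s' a * r s' a

/-- Action-value function `Q^π(s,a)`. -/
def qFn {S A : Type} [Fintype S] [Fintype A] [DecidableEq S]
    (P : S → A → S → ℝ) (pol : S → A → ℝ) (γ : ℝ) (r : S → A → ℝ) (s : S) (a : A) : ℝ :=
  r s a + γ * ∑ s' : S, P s a s' * valueFn P pol γ r s'

/-- Total variation distance between two distributions on a finite set. -/
def tvDist {X : Type} [Fintype X] (p q : X → ℝ) : ℝ :=
  (1 / 2) * ∑ x : X, |p x - q x|

/-- `P` is a Markov kernel: nonnegative and each `P s a` sums to one. -/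
def IsKernel {S A : Type} [Fintype S] (P : S → A → S → ℝ) : Prop :=
  ∀ s a, (∀ s', 0 ≤ P s a s') ∧ ∑ s' : S, P s a s' = 1

/-- `pol` is a (stochastic) policy. -/
def IsPolicy {S A : Type} [Fintype A] (pol : S → A → ℝ) : Prop :=
  ∀ s, (∀ a, 0 ≤ pol s a) ∧ ∑ a : A, pol s a = 1

/-- `ρ0` is a probability distribution over states. -/
def IsDist {S : Type} [Fintype S] (ρ0 : S → ℝ) : Prop :=
  (∀ s, 0 ≤ ρ0 s) ∧ ∑ s : S, ρ0 s = 1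


/-! The target value function `V` satisfies the Bellman equation `V = R + γ P_tar V` (with `R`,
`P_tar` averaged over the policy), while for any `V` the source chain telescopes:
`⟨ρ0, V⟩ = ∑ₜ γᵗ ⟨dₜ, V - γ P_src V⟩` with `dₜ` the source state distributions. Combined, they give
the exact identity `η_tar = η_src - γ E_{ρ_src}[P_src V - P_tar V]`; the stated bound follows by
taking absolute values and from `γ ≤ γ / (1 - γ)`. -/

section Chain
variable {S A : Type} [Fintype S] [Fintype A]

def policyMean (pol c : S → A → ℝ) (s : S) : ℝ :=
  ∑ a : A, pol s a * c s a

def discountedValue (P : S → A → S → ℝ) (pol : S → A → ℝ) (ρ0 : S → ℝ) (γ : ℝ)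
    (f : S → ℝ) : ℝ :=
  ∑' t : ℕ, γ ^ t * ∑ s : S, stateDist P pol ρ0 t s * f s

lemma sum_stateDist_succ_mul (P : S → A → S → ℝ) (pol : S → A → ℝ) (ρ0 : S → ℝ) (t : ℕ)
    (f : S → ℝ) :
    ∑ s' : S, stateDist P pol ρ0 (t + 1) s' * f s' =
      ∑ s : S, stateDist P pol ρ0 t s *
        policyMean pol (fun s a => ∑ s' : S, P s a s' * f s') s := by
  simp only [stateDist, policyMean, Finset.sum_mul, Finset.mul_sum]
  rw [Finset.sum_comm]
  refine Finset.sum_congr rfl fun s _ => ?_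
  rw [Finset.sum_comm]
  simp only [mul_assoc]

lemma stateDist_succ_eq_stateDist_one (P : S → A → S → ℝ) (pol : S → A → ℝ) (ρ0 : S → ℝ)
    (t : ℕ) : stateDist P pol ρ0 (t + 1) = stateDist P pol (stateDist P pol ρ0 1) t := by
  induction t with
  | zero => rfl
  | succ t ih => exact congrArg (fun d s' => ∑ s : S, ∑ a : A, d s * pol s a * P s a s') ih

lemma IsDist.le_one {d : S → ℝ} (hd : IsDist d) (s : S) : d s ≤ 1 :=
  hd.2 ▸ Finset.single_le_sum (fun s _ => hd.1 s) (Finset.mem_univ s)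

lemma IsDist.abs_sum_mul_le {d : S → ℝ} (hd : IsDist d) (f : S → ℝ) :
    |∑ s : S, d s * f s| ≤ ∑ s : S, |f s| :=
  (Finset.abs_sum_le_sum_abs _ _).trans <| Finset.sum_le_sum fun s _ => by
    rw [abs_mul, abs_of_nonneg (hd.1 s)]
    exact mul_le_of_le_one_left (abs_nonneg _) (hd.le_one s)

lemma summable_geometric_mul_of_abs_le {γ C : ℝ} (hγ0 : 0 ≤ γ) (hγ1 : γ < 1) {g : ℕ → ℝ}
    (hg : ∀ t, |g t| ≤ C) : Summable fun t => γ ^ t * g t :=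
  Summable.of_norm_bounded ((summable_geometric_of_lt_one hγ0 hγ1).mul_left C) fun t => by
    rw [Real.norm_eq_abs, abs_mul, abs_pow, abs_of_nonneg hγ0, mul_comm]
    exact mul_le_mul_of_nonneg_right (hg t) (pow_nonneg hγ0 t)

variable {P : S → A → S → ℝ} {pol : S → A → ℝ} {ρ0 : S → ℝ} {γ : ℝ}

lemma isDist_stateDist (hP : IsKernel P) (hpol : IsPolicy pol) (hρ0 : IsDist ρ0) (t : ℕ) :
    IsDist (stateDist P pol ρ0 t) := by
  induction t with
  | zero => exact hρ0
  | succ t ih =>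
    refine ⟨fun s' => ?_, ?_⟩
    · exact Finset.sum_nonneg fun s _ => Finset.sum_nonneg fun a _ =>
        mul_nonneg (mul_nonneg (ih.1 s) ((hpol s).1 a)) ((hP s a).1 s')
    · have h := sum_stateDist_succ_mul P pol ρ0 t fun _ => 1
      simp only [mul_one, policyMean, (hP _ _).2, (hpol _).2] at h
      rw [h, ih.2]

lemma summable_discounted (hP : IsKernel P) (hpol : IsPolicy pol) (hρ0 : IsDist ρ0)
    (hγ0 : 0 ≤ γ) (hγ1 : γ < 1) (f : S → ℝ) :
    Summable fun t => γ ^ t * ∑ s : S, stateDist P pol ρ0 t s * f s :=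
  summable_geometric_mul_of_abs_le hγ0 hγ1 fun t =>
    (isDist_stateDist hP hpol hρ0 t).abs_sum_mul_le f

lemma discountedValue_sub_mul (hP : IsKernel P) (hpol : IsPolicy pol) (hρ0 : IsDist ρ0)
    (hγ0 : 0 ≤ γ) (hγ1 : γ < 1) (f g : S → ℝ) (c : ℝ) :
    discountedValue P pol ρ0 γ (fun s => f s - c * g s) =
      discountedValue P pol ρ0 γ f - c * discountedValue P pol ρ0 γ g := by
  rw [discountedValue, discountedValue, discountedValue, ← tsum_mul_left,
    ← (summable_discounted hP hpol hρ0 hγ0 hγ1 f).tsum_sub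
      ((summable_discounted hP hpol hρ0 hγ0 hγ1 g).mul_left c)]
  refine tsum_congr fun t => ?_
  simp only [mul_sub, Finset.sum_sub_distrib, Finset.mul_sum]
  exact congrArg _ (Finset.sum_congr rfl fun _ _ => by ring)

lemma sum_mul_eq_discountedValue (hP : IsKernel P) (hpol : IsPolicy pol) (hρ0 : IsDist ρ0)
    (hγ0 : 0 ≤ γ) (hγ1 : γ < 1) (V : S → ℝ) :
    ∑ s : S, ρ0 s * V s = discountedValue P pol ρ0 γ
      (fun s => V s - γ * policyMean pol (fun s a => ∑ s' : S, P s a s' * V s') s) := by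
  have hshift : γ * discountedValue P pol ρ0 γ
      (policyMean pol fun s a => ∑ s' : S, P s a s' * V s') =
        ∑' t : ℕ, γ ^ (t + 1) * ∑ s : S, stateDist P pol ρ0 (t + 1) s * V s := by
    rw [discountedValue, ← tsum_mul_left]
    refine tsum_congr fun t => ?_
    rw [sum_stateDist_succ_mul, pow_succ]
    ring
  rw [discountedValue_sub_mul hP hpol hρ0 hγ0 hγ1, hshift, discountedValue,
    (summable_discounted hP hpol hρ0 hγ0 hγ1 V).tsum_eq_zero_add]
  simp [stateDist]

lemma discountedValue_eq_add (hP : IsKernel P) (hpol : IsPolicy pol) (hρ0 : IsDist ρ0)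
    (hγ0 : 0 ≤ γ) (hγ1 : γ < 1) (f : S → ℝ) :
    discountedValue P pol ρ0 γ f =
      ∑ s : S, ρ0 s * f s + γ * discountedValue P pol (stateDist P pol ρ0 1) γ f := by
  rw [discountedValue, (summable_discounted hP hpol hρ0 hγ0 hγ1 f).tsum_eq_zero_add,
    discountedValue, ← tsum_mul_left]
  congr 1
  · simp [stateDist]
  · exact tsum_congr fun t => by rw [stateDist_succ_eq_stateDist_one, pow_succ]; ring

lemma sum_occupancy_mul (hP : IsKernel P) (hpol : IsPolicy pol) (hρ0 : IsDist ρ0)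
    (hγ0 : 0 ≤ γ) (hγ1 : γ < 1) (c : S → A → ℝ) :
    ∑ s : S, ∑ a : A, occupancy P pol ρ0 γ s a * c s a =
      (1 - γ) * discountedValue P pol ρ0 γ (policyMean pol c) := by
  have hsummable : ∀ s, Summable fun t => γ ^ t * stateDist P pol ρ0 t s := fun s =>
    summable_geometric_mul_of_abs_le hγ0 hγ1 fun t => by
      rw [abs_of_nonneg ((isDist_stateDist hP hpol hρ0 t).1 s)]
      exact (isDist_stateDist hP hpol hρ0 t).le_one s
  have hterm : ∀ s a, occupancy P pol ρ0 γ s a * c s a =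
      (1 - γ) * ((∑' t : ℕ, γ ^ t * stateDist P pol ρ0 t s) * (pol s a * c s a)) := by
    intro s a
    rw [occupancy, mul_assoc, ← tsum_mul_right, ← tsum_mul_right]
    exact congrArg _ (tsum_congr fun t => by ring)
  simp only [hterm, ← Finset.mul_sum]
  congr 1
  calc ∑ s : S, (∑' t : ℕ, γ ^ t * stateDist P pol ρ0 t s) * policyMean pol c s
      = ∑ s : S, ∑' t : ℕ, γ ^ t * stateDist P pol ρ0 t s * policyMean pol c s := by
        simp only [tsum_mul_right]
    _ = ∑' t : ℕ, ∑ s : S, γ ^ t * stateDist P pol ρ0 t s * policyMean pol c s :=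
        (Summable.tsum_finsetSum fun s _ => (hsummable s).mul_right _).symm
    _ = discountedValue P pol ρ0 γ (policyMean pol c) :=
        tsum_congr fun t => by simp only [Finset.mul_sum, mul_assoc]

lemma occupancy_nonneg (hP : IsKernel P) (hpol : IsPolicy pol) (hρ0 : IsDist ρ0)
    (hγ0 : 0 ≤ γ) (hγ1 : γ ≤ 1) (s : S) (a : A) : 0 ≤ occupancy P pol ρ0 γ s a :=
  mul_nonneg (sub_nonneg.2 hγ1) <| tsum_nonneg fun t =>
    mul_nonneg (mul_nonneg (pow_nonneg hγ0 t) ((isDist_stateDist hP hpol hρ0 t).1 s)) ((hpol s).1 a)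

end Chain

section Value
variable {S A : Type} [Fintype S] [Fintype A] [DecidableEq S]
variable {P : S → A → S → ℝ} {pol : S → A → ℝ} {γ : ℝ} {r : S → A → ℝ}

lemma isDist_indicator (s : S) : IsDist fun s' : S => if s' = s then (1 : ℝ) else 0 :=
  ⟨fun _ => ite_nonneg zero_le_one le_rfl, by simp⟩

lemma stateDist_eq_sum_mul (P : S → A → S → ℝ) (pol : S → A → ℝ) (ρ0 : S → ℝ) (t : ℕ)
    (s' : S) : stateDist P pol ρ0 t s' =
      ∑ s : S, ρ0 s * stateDist P pol (fun s'' => if s'' = s then 1 else 0) t s' := by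
  induction t generalizing s' with
  | zero => simp [stateDist]
  | succ t ih =>
    simp only [stateDist, ih, Finset.sum_mul, Finset.mul_sum, mul_assoc]
    conv_rhs => rw [Finset.sum_comm]
    exact Finset.sum_congr rfl fun _ _ => Finset.sum_comm

lemma sum_mul_valueFn (hP : IsKernel P) (hpol : IsPolicy pol) (hγ0 : 0 ≤ γ) (hγ1 : γ < 1)
    (ρ0 : S → ℝ) :
    ∑ s : S, ρ0 s * valueFn P pol γ r s = discountedValue P pol ρ0 γ (policyMean pol r) := by
  calc ∑ s : S, ρ0 s * valueFn P pol γ r s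
      = ∑ s : S, ∑' t : ℕ, ρ0 s * (γ ^ t * ∑ s' : S,
          stateDist P pol (fun s'' => if s'' = s then 1 else 0) t s' * policyMean pol r s') := by
        simp only [valueFn, tsum_mul_left]
        rfl
    _ = ∑' t : ℕ, ∑ s : S, ρ0 s * (γ ^ t * ∑ s' : S,
          stateDist P pol (fun s'' => if s'' = s then 1 else 0) t s' * policyMean pol r s') :=
        (Summable.tsum_finsetSum fun s _ =>
          (summable_discounted hP hpol (isDist_indicator s) hγ0 hγ1 _).mul_left _).symm
    _ = discountedValue P pol ρ0 γ (policyMean pol r) := by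
        refine tsum_congr fun t => ?_
        simp only [stateDist_eq_sum_mul P pol ρ0 t, Finset.mul_sum, Finset.sum_mul]
        rw [Finset.sum_comm]
        exact Finset.sum_congr rfl fun _ _ => Finset.sum_congr rfl fun _ _ => by ring

lemma valueFn_bellman (hP : IsKernel P) (hpol : IsPolicy pol) (hγ0 : 0 ≤ γ) (hγ1 : γ < 1)
    (s : S) : valueFn P pol γ r s = policyMean pol r s +
      γ * policyMean pol (fun s a => ∑ s' : S, P s a s' * valueFn P pol γ r s') s := by
  change discountedValue P pol (fun s' => if s' = s then 1 else 0) γ (policyMean pol r) = _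
  rw [discountedValue_eq_add hP hpol (isDist_indicator s) hγ0 hγ1,
    ← sum_mul_valueFn hP hpol hγ0 hγ1, sum_stateDist_succ_mul P pol _ 0]
  simp [stateDist]

lemma ret_eq_mul_sum_mul_valueFn {ρ0 : S → ℝ} (hP : IsKernel P) (hpol : IsPolicy pol)
    (hρ0 : IsDist ρ0) (hγ0 : 0 ≤ γ) (hγ1 : γ < 1) :
    ret P pol ρ0 γ r = (1 - γ) * ∑ s : S, ρ0 s * valueFn P pol γ r s := by
  rw [sum_mul_valueFn hP hpol hγ0 hγ1, ← sum_occupancy_mul hP hpol hρ0 hγ0 hγ1]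
  rfl

end Value

lemma ret_eq_ret_sub_mul_sum_occupancy_mul {S A : Type} [Fintype S] [Fintype A]
    [DecidableEq S] {Psrc Ptar : S → A → S → ℝ} {pol : S → A → ℝ} {ρ0 : S → ℝ} {γ : ℝ}
    {r : S → A → ℝ} (hPsrc : IsKernel Psrc) (hPtar : IsKernel Ptar) (hpol : IsPolicy pol)
    (hρ0 : IsDist ρ0) (hγ0 : 0 ≤ γ) (hγ1 : γ < 1) :
    ret Ptar pol ρ0 γ r = ret Psrc pol ρ0 γ r - γ *
      ∑ s : S, ∑ a : A, occupancy Psrc pol ρ0 γ s a *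
        ((∑ s' : S, Psrc s a s' * valueFn Ptar pol γ r s') -
          (∑ s' : S, Ptar s a s' * valueFn Ptar pol γ r s')) := by
  set V := valueFn Ptar pol γ r
  have hbellman : ∀ s, V s - γ * policyMean pol (fun s a => ∑ s' : S, Psrc s a s' * V s') s =
      policyMean pol r s - γ * policyMean pol (fun s a =>
        (∑ s' : S, Psrc s a s' * V s') - (∑ s' : S, Ptar s a s' * V s')) s := by
    intro s
    rw [show V s = _ from valueFn_bellman hPtar hpol hγ0 hγ1 s]
    simp only [policyMean, mul_sub, Finset.sum_sub_distrib]
    ring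
  rw [ret_eq_mul_sum_mul_valueFn hPtar hpol hρ0 hγ0 hγ1,
    sum_mul_eq_discountedValue hPsrc hpol hρ0 hγ0 hγ1, funext hbellman,
    discountedValue_sub_mul hPsrc hpol hρ0 hγ0 hγ1, ret, sum_occupancy_mul hPsrc hpol hρ0 hγ0 hγ1,
    sum_occupancy_mul hPsrc hpol hρ0 hγ0 hγ1]
  ring

theorem performance_bound_value_difference {S A : Type} [Fintype S] [Fintype A] [DecidableEq S]
    (Psrc Ptar : S → A → S → ℝ) (pol : S → A → ℝ) (ρ0 : S → ℝ) (γ : ℝ)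
    (r : S → A → ℝ)
    (hPsrc : IsKernel Psrc) (hPtar : IsKernel Ptar) (hpol : IsPolicy pol) (hρ0 : IsDist ρ0)
    (hγ0 : 0 ≤ γ) (hγ1 : γ < 1) :
    ret Ptar pol ρ0 γ r ≥
      ret Psrc pol ρ0 γ r -
        (γ / (1 - γ)) *
          ∑ s : S, ∑ a : A, occupancy Psrc pol ρ0 γ s a *
            |(∑ s' : S, Psrc s a s' * valueFn Ptar pol γ r s') -
             (∑ s' : S, Ptar s a s' * valueFn Ptar pol γ r s')| := by
  have hocc := occupancy_nonneg hPsrc hpol hρ0 hγ0 hγ1.le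
  rw [ge_iff_le, ret_eq_ret_sub_mul_sum_occupancy_mul hPsrc hPtar hpol hρ0 hγ0 hγ1,
    sub_le_sub_iff_left]
  refine (mul_le_mul_of_nonneg_left (Finset.sum_le_sum fun s _ => Finset.sum_le_sum fun a _ =>
    mul_le_mul_of_nonneg_left (le_abs_self _) (hocc s a)) hγ0).trans ?_
  exact mul_le_mul_of_nonneg_right (le_div_self hγ0 (by linarith) (by linarith))
    (Finset.sum_nonneg fun s _ => Finset.sum_nonneg fun a _ => mul_nonneg (hocc s a) (abs_nonneg _))
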